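/- Assume ‖Z_1‖ ≤ B almost surely for some constant B > 0. Then for every n ≥ 1 and every t > 0, P( |L_n − E[L_n]| > t ) ≤ 2 exp( − t² / (8 π² B² n) ). -/

import Mathlib

open MeasureTheory ProbabilityTheory Filter
open scoped RealInnerProductSpace

/-- The unit vector `(cos θ, sin θ)` in the plane. -/
noncomputable def dir (θ : ℝ) : EuclideanSpace ℝ (Fin 2) :=
  (EuclideanSpace.equiv (Fin 2) ℝ).symm ![Real.cos θ, Real.sin θ]

/-- The random walk with increments `Z`: `walk Z n ω = Z 0 ω + ⋯ + Z (n-1) ω`. -/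
noncomputable def walk {Ω : Type*} (Z : ℕ → Ω → EuclideanSpace ℝ (Fin 2)) (n : ℕ) (ω : Ω) :
    EuclideanSpace ℝ (Fin 2) :=
  ∑ i ∈ Finset.range n, Z i ω

/-- Perimeter length of the convex hull of `S 0, …, S n`, via Cauchy's formula. -/
noncomputable def perim {Ω : Type*} (Z : ℕ → Ω → EuclideanSpace ℝ (Fin 2)) (n : ℕ) (ω : Ω) : ℝ :=
  ∫ θ in (0:ℝ)..Real.pi,
    (((Finset.range (n+1)).sup' Finset.nonempty_range_add_one
        (fun i => ⟪walk Z i ω, dir θ⟫))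
      - ((Finset.range (n+1)).inf' Finset.nonempty_range_add_one
        (fun i => ⟪walk Z i ω, dir θ⟫)))

/-!
Write `Lₙ = F(Z₁, …, Zₙ)`. Replacing one increment `Zᵢ` by `Zᵢ'` translates the points `Sₖ`,
`k ≥ i`, by `w = Zᵢ' - Zᵢ`, so in every direction `e_θ` the width `max Sₖ·e_θ - min Sₖ·e_θ`
changes by at most `|w·e_θ| ≤ 2B`, and `Lₙ` by at most `2πB`. For a function of independent
coordinates with such bounded differences, integrating out one coordinate at a time and applying
Hoeffding's lemma to each section shows that `Lₙ - E Lₙ` is sub-Gaussian with parameter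
`n (2πB)²` (McDiarmid); the Chernoff bound on both tails gives the claim. The increments are cut
off at norm `B` before `F` is applied, so that the differences are bounded everywhere; almost
surely the cutoff changes nothing.
-/

open scoped NNReal

theorem MeasureTheory.abs_integral_le_of_forall_abs_le {α : Type*} [MeasurableSpace α]
    {μ : Measure α} [IsProbabilityMeasure μ] {g : α → ℝ} {C : ℝ} (h : ∀ a, |g a| ≤ C) :
    |∫ a, g a ∂μ| ≤ C := by
  have := norm_integral_le_of_norm_le_const (μ := μ) (f := g) (C := C)
    (ae_of_all _ fun a => by rw [Real.norm_eq_abs]; exact h a)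
  simpa [Real.norm_eq_abs] using this

namespace ProbabilityTheory

variable {α β : Type*} [MeasurableSpace α] [MeasurableSpace β]

theorem hasSubgaussianMGF_sub_integral_of_abs_sub_le {μ : Measure α} [IsProbabilityMeasure μ]
    {g : α → ℝ} (hg : Measurable g) {c : ℝ≥0} (h : ∀ a b, |g a - g b| ≤ c) :
    HasSubgaussianMGF (fun a => g a - ∫ b, g b ∂μ) (c ^ 2) μ := by
  obtain ⟨b⟩ := nonempty_of_isProbabilityMeasure μ
  have hIcc : ∀ a, g a ∈ Set.Icc (g b - c) (g b + c) := fun a => by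
    have := abs_le.mp (h a b)
    constructor <;> linarith
  convert hasSubgaussianMGF_of_mem_Icc (μ := μ) hg.aemeasurable (ae_of_all _ hIcc) using 2
  rw [add_sub_sub_cancel, ← two_mul]
  ext
  simp

theorem HasSubgaussianMGF.prod_of_sections {μ : Measure α} {ν : Measure β}
    [IsProbabilityMeasure μ] [IsProbabilityMeasure ν] {F : α × β → ℝ} (hF : Measurable F)
    {M : ℝ} (hM : ∀ p, |F p| ≤ M) {m : ℝ} {c₁ c₂ : ℝ≥0}
    (h₁ : ∀ b, HasSubgaussianMGF (fun a => F (a, b) - ∫ a', F (a', b) ∂μ) c₁ μ)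
    (h₂ : HasSubgaussianMGF (fun b => ∫ a, F (a, b) ∂μ - m) c₂ ν) :
    HasSubgaussianMGF (fun p => F p - m) (c₁ + c₂) (μ.prod ν) := by
  have hIcc : ∀ p, F p - m ∈ Set.Icc (-M - m) (M - m) := fun p => by
    have := abs_le.mp (hM p)
    constructor <;> linarith
  have hint : ∀ t, Integrable (fun p => Real.exp (t * (F p - m))) (μ.prod ν) := fun t =>
    integrable_exp_mul_of_mem_Icc (hF.sub measurable_const).aemeasurable (ae_of_all _ hIcc)
  refine ⟨hint, fun t => ?_⟩
  set G : β → ℝ := fun b => ∫ a, F (a, b) ∂μ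
  have hsection : ∀ b, ∫ a, Real.exp (t * (F (a, b) - m)) ∂μ
      ≤ Real.exp (t * (G b - m)) * Real.exp (c₁ * t ^ 2 / 2) := fun b => calc
    ∫ a, Real.exp (t * (F (a, b) - m)) ∂μ
        = Real.exp (t * (G b - m)) * mgf (fun a => F (a, b) - G b) μ t := by
      rw [mgf, ← integral_const_mul]
      congr 1 with a
      rw [← Real.exp_add]
      ring_nf
    _ ≤ _ := by gcongr; exact (h₁ b).mgf_le t
  calc mgf (fun p => F p - m) (μ.prod ν) t
      = ∫ b, ∫ a, Real.exp (t * (F (a, b) - m)) ∂μ ∂ν := integral_prod_symm _ (hint t)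
    _ ≤ ∫ b, Real.exp (t * (G b - m)) * Real.exp (c₁ * t ^ 2 / 2) ∂ν :=
      integral_mono (hint t).integral_prod_right ((h₂.integrable_exp_mul t).mul_const _) hsection
    _ = mgf (fun b => G b - m) ν t * Real.exp (c₁ * t ^ 2 / 2) := integral_mul_const _ _
    _ ≤ Real.exp (c₂ * t ^ 2 / 2) * Real.exp (c₁ * t ^ 2 / 2) := by
      gcongr; exact h₂.mgf_le t
    _ = Real.exp (↑(c₁ + c₂) * t ^ 2 / 2) := by
      rw [← Real.exp_add]; push_cast; ring_nf

theorem hasSubgaussianMGF_sub_integral_pi_of_abs_update_sub_le {n : ℕ} (μ : Fin n → Measure α)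
    [∀ i, IsProbabilityMeasure (μ i)] {f : (Fin n → α) → ℝ} (hf : Measurable f) {M : ℝ}
    (hM : ∀ x, |f x| ≤ M) (c : Fin n → ℝ≥0)
    (hc : ∀ x i a, |f (Function.update x i a) - f x| ≤ c i) :
    HasSubgaussianMGF (fun x => f x - ∫ y, f y ∂Measure.pi μ) (∑ i, c i ^ 2) (Measure.pi μ) := by
  induction n with
  | zero =>
    have hconst : ∀ x y : Fin 0 → α, f x = f y := fun x y => congrArg f (Subsingleton.elim x y)
    refine HasSubgaussianMGF.fun_zero.congr (ae_of_all _ fun x => ?_)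
    simp [hconst _ x]
  | succ n ih =>
    let e := MeasurableEquiv.piFinSuccAbove (fun _ : Fin (n + 1) => α) 0
    have he : ∀ a y, e.symm (a, y) = Fin.cons a y := fun _ _ => by
      simp only [e, MeasurableEquiv.piFinSuccAbove_symm_apply, Fin.insertNthEquiv_zero]
      rfl
    have hMP := measurePreserving_piFinSuccAbove μ 0
    let ν := Measure.pi fun j => μ (Fin.succAbove 0 j)
    let F : α × (Fin n → α) → ℝ := fun p => f (e.symm p)
    have hF : Measurable F := hf.comp e.symm.measurable
    have hsec : ∀ y, Measurable fun a => F (a, y) := fun y => hF.comp measurable_prodMk_right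
    have hsec_int : ∀ y, Integrable (fun a => F (a, y)) (μ 0) := fun y =>
      .of_bound (hsec y).aestronglyMeasurable M (ae_of_all _ fun a => hM _)
    have hmean : ∫ x, f x ∂Measure.pi μ = ∫ y, ∫ a, F (a, y) ∂μ 0 ∂ν := by
      rw [← integral_prod_symm _ (.of_bound hF.aestronglyMeasurable M (ae_of_all _ fun p => hM _)),
        ← hMP.integral_comp' F]
      exact integral_congr_ae (ae_of_all _ fun x => congrArg f (e.symm_apply_apply x).symm)
    -- Given the other coordinates, `f` is bounded-difference in the first one (`h₁`), and its
    -- average over the first one inherits the hypotheses in the remaining ones (`h₂`).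
    have h₁ : ∀ y, HasSubgaussianMGF (fun a => F (a, y) - ∫ a', F (a', y) ∂μ 0) (c 0 ^ 2) (μ 0) :=
      fun y => hasSubgaussianMGF_sub_integral_of_abs_sub_le (hsec y) fun a b => by
        simpa only [F, he, Fin.update_cons_zero] using hc (Fin.cons b y) 0 a
    have h₂ : HasSubgaussianMGF (fun y => ∫ a, F (a, y) ∂μ 0 - ∫ x, f x ∂Measure.pi μ)
        (∑ j : Fin n, c (Fin.succAbove 0 j) ^ 2) ν := by
      rw [hmean]
      refine ih _ hF.stronglyMeasurable.integral_prod_left'.measurable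
        (fun y => abs_integral_le_of_forall_abs_le fun a => hM _) _ fun y j b => ?_
      rw [← integral_sub (hsec_int _) (hsec_int _)]
      refine abs_integral_le_of_forall_abs_le fun a => ?_
      simp only [F, he, Fin.cons_update]
      exact hc _ _ _
    have hprod := HasSubgaussianMGF.prod_of_sections hF (fun p => hM _) h₁ h₂
    rw [← hMP.map_eq] at hprod
    convert hprod.of_map e.measurable.aemeasurable using 1
    · ext x
      simp [F]
    · rw [Fin.sum_univ_succ]
      simp

theorem iIndepFun.hasSubgaussianMGF_of_abs_update_sub_le {Ω : Type*} [MeasurableSpace Ω]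
    {P : Measure Ω} [IsProbabilityMeasure P] {n : ℕ} {X : Fin n → Ω → α}
    (hX : ∀ i, Measurable (X i)) (hindep : iIndepFun X P) {f : (Fin n → α) → ℝ}
    (hf : Measurable f) {M : ℝ} (hM : ∀ x, |f x| ≤ M) (c : Fin n → ℝ≥0)
    (hc : ∀ x i a, |f (Function.update x i a) - f x| ≤ c i) :
    HasSubgaussianMGF (fun ω => f (fun i => X i ω) - ∫ ω', f (fun i => X i ω') ∂P)
      (∑ i, c i ^ 2) P := by
  have : ∀ i, IsProbabilityMeasure (P.map (X i)) := fun i =>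
    Measure.isProbabilityMeasure_map (hX i).aemeasurable
  have hY : Measurable fun ω i => X i ω := measurable_pi_lambda _ hX
  have h := hasSubgaussianMGF_sub_integral_pi_of_abs_update_sub_le (fun i => P.map (X i)) hf hM c hc
  rw [← hindep.map_fun_eq_pi_map fun i => (hX i).aemeasurable,
    integral_map hY.aemeasurable hf.aestronglyMeasurable] at h
  exact h.of_map hY.aemeasurable

theorem HasSubgaussianMGF.measure_lt_abs_le {Ω : Type*} [MeasurableSpace Ω] {μ : Measure Ω}
    [IsFiniteMeasure μ] {X : Ω → ℝ} {c : ℝ≥0} (h : HasSubgaussianMGF X c μ) {ε : ℝ} (hε : 0 ≤ ε) :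
    μ {ω | ε < |X ω|} ≤ ENNReal.ofReal (2 * Real.exp (-ε ^ 2 / (2 * c))) := by
  have htail : ∀ {Y : Ω → ℝ}, HasSubgaussianMGF Y c μ →
      μ {ω | ε ≤ Y ω} ≤ ENNReal.ofReal (Real.exp (-ε ^ 2 / (2 * c))) := fun hY =>
    (ofReal_measureReal).symm.trans_le (ENNReal.ofReal_le_ofReal (hY.measure_ge_le hε))
  calc μ {ω | ε < |X ω|} ≤ μ ({ω | ε ≤ X ω} ∪ {ω | ε ≤ (-X) ω}) := by
        refine measure_mono fun ω hω => ?_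
        have hω : ε < |X ω| := hω
        rcases lt_abs.mp hω with hpos | hneg
        · exact Or.inl hpos.le
        · exact Or.inr hneg.le
    _ ≤ μ {ω | ε ≤ X ω} + μ {ω | ε ≤ (-X) ω} := measure_union_le _ _
    _ ≤ _ := by
      rw [two_mul, ENNReal.ofReal_add (Real.exp_nonneg _) (Real.exp_nonneg _)]
      exact add_le_add (htail h) (htail h.neg)

end ProbabilityTheory

section Geometry

open Finset

theorem abs_sup'_sub_inf'_sub_le {ι : Type*} {s : Finset ι} (hs : s.Nonempty) {f g : ι → ℝ}
    {a b : ℝ} (h : ∀ i ∈ s, g i - f i ∈ Set.Icc a b) :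
    |(s.sup' hs g - s.inf' hs g) - (s.sup' hs f - s.inf' hs f)| ≤ b - a := by
  have hg_sup : s.sup' hs g ≤ s.sup' hs f + b :=
    sup'_le _ _ fun i hi => by linarith [le_sup' f hi, (h i hi).2]
  have hf_sup : s.sup' hs f ≤ s.sup' hs g - a :=
    sup'_le _ _ fun i hi => by linarith [le_sup' g hi, (h i hi).1]
  have hg_inf : s.inf' hs f + a ≤ s.inf' hs g :=
    le_inf' _ _ fun i hi => by linarith [inf'_le f hi, (h i hi).1]
  have hf_inf : s.inf' hs g - b ≤ s.inf' hs f :=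
    le_inf' _ _ fun i hi => by linarith [inf'_le g hi, (h i hi).2]
  rw [abs_le]
  constructor <;> linarith

local notation "ℝ²" => EuclideanSpace ℝ (Fin 2)

theorem norm_dir (θ : ℝ) : ‖dir θ‖ = 1 := by
  simp [dir, EuclideanSpace.norm_eq, Fin.sum_univ_two]

theorem continuous_dir : Continuous dir := by
  unfold dir
  fun_prop

noncomputable def hullWidth (z : ℕ → ℝ²) (n : ℕ) (u : ℝ²) : ℝ :=
  (range (n + 1)).sup' nonempty_range_add_one (fun k => ⟪∑ j ∈ range k, z j, u⟫)
    - (range (n + 1)).inf' nonempty_range_add_one (fun k => ⟪∑ j ∈ range k, z j, u⟫)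

noncomputable def hullPerimeter (z : ℕ → ℝ²) (n : ℕ) : ℝ :=
  ∫ θ in (0:ℝ)..Real.pi, hullWidth z n (dir θ)

theorem perim_eq_hullPerimeter {Ω : Type*} (Z : ℕ → Ω → ℝ²) (n : ℕ) (ω : Ω) :
    perim Z n ω = hullPerimeter (fun j => Z j ω) n := rfl

theorem continuous_hullWidth_dir (n : ℕ) :
    Continuous fun p : (ℕ → ℝ²) × ℝ => hullWidth p.1 n (dir p.2) := by
  have := continuous_dir
  unfold hullWidth
  fun_prop

theorem continuous_hullPerimeter (n : ℕ) : Continuous fun z => hullPerimeter z n :=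
  intervalIntegral.continuous_parametric_intervalIntegral_of_continuous'
    (continuous_hullWidth_dir n) 0 Real.pi

theorem sum_range_sub_sum_range_eq_ite {z z' : ℕ → ℝ²} {i : ℕ} (h : ∀ j ≠ i, z' j = z j)
    (k : ℕ) :
    ∑ j ∈ range k, z' j - ∑ j ∈ range k, z j = if i < k then z' i - z i else 0 := by
  rw [← sum_sub_distrib]
  calc ∑ j ∈ range k, (z' j - z j) = ∑ j ∈ range k, if j = i then z' i - z i else 0 :=
        sum_congr rfl fun j _ => by
          split_ifs with hj
          · rw [hj]
          · rw [h j hj, sub_self]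
    _ = _ := by simp only [sum_ite_eq', mem_range]

theorem abs_hullWidth_sub_le {z z' : ℕ → ℝ²} {i : ℕ} (h : ∀ j ≠ i, z' j = z j) (n : ℕ)
    (u : ℝ²) : |hullWidth z' n u - hullWidth z n u| ≤ |⟪z' i - z i, u⟫| := by
  set σ := ⟪z' i - z i, u⟫
  calc |hullWidth z' n u - hullWidth z n u| ≤ max σ 0 - min σ 0 :=
        abs_sup'_sub_inf'_sub_le _ fun k _ => by
          rw [← inner_sub_left, sum_range_sub_sum_range_eq_ite h]
          split_ifs
          · exact ⟨min_le_left _ _, le_max_left _ _⟩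
          · rw [inner_zero_left]
            exact ⟨min_le_right _ _, le_max_right _ _⟩
    _ = |σ| := by rw [max_sub_min_eq_abs', sub_zero]

theorem intervalIntegrable_hullWidth_dir (z : ℕ → ℝ²) (n : ℕ) (a b : ℝ) :
    IntervalIntegrable (fun θ => hullWidth z n (dir θ)) volume a b :=
  ((continuous_hullWidth_dir n).comp (continuous_const.prodMk continuous_id)).intervalIntegrable _ _

theorem abs_hullPerimeter_sub_le {z z' : ℕ → ℝ²} {i : ℕ} (h : ∀ j ≠ i, z' j = z j) (n : ℕ) :
    |hullPerimeter z' n - hullPerimeter z n| ≤ Real.pi * ‖z' i - z i‖ := by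
  rw [hullPerimeter, hullPerimeter, ← intervalIntegral.integral_sub
    (intervalIntegrable_hullWidth_dir _ _ _ _) (intervalIntegrable_hullWidth_dir _ _ _ _),
    ← Real.norm_eq_abs]
  calc _ ≤ ‖z' i - z i‖ * |Real.pi - 0| :=
        intervalIntegral.norm_integral_le_of_norm_le_const fun θ _ => by
          rw [Real.norm_eq_abs]
          exact (abs_hullWidth_sub_le h n _).trans <| (abs_real_inner_le_norm _ _).trans_eq <| by
            rw [norm_dir, mul_one]
    _ = Real.pi * ‖z' i - z i‖ := by rw [sub_zero, abs_of_pos Real.pi_pos, mul_comm]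

theorem abs_hullWidth_le {z : ℕ → ℝ²} {B : ℝ} (hz : ∀ j, ‖z j‖ ≤ B) (n : ℕ) {u : ℝ²}
    (hu : ‖u‖ = 1) : |hullWidth z n u| ≤ 2 * (n * B) := by
  have hB : 0 ≤ B := (norm_nonneg _).trans (hz 0)
  have key := abs_sup'_sub_inf'_sub_le (s := range (n + 1)) nonempty_range_add_one
    (f := fun _ => 0) (g := fun k => ⟪∑ j ∈ range k, z j, u⟫) (a := -(n * B)) (b := n * B)
    fun k hk => by
      have hkn : (k : ℝ) ≤ n := by exact_mod_cast Nat.lt_succ_iff.mp (mem_range.mp hk)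
      have : |⟪∑ j ∈ range k, z j, u⟫| ≤ n * B := calc
        _ ≤ ‖∑ j ∈ range k, z j‖ := (abs_real_inner_le_norm _ _).trans_eq (by rw [hu, mul_one])
        _ ≤ ∑ j ∈ range k, B := norm_sum_le_of_le _ fun j _ => hz j
        _ = k * B := by rw [sum_const, card_range, nsmul_eq_mul]
        _ ≤ n * B := by gcongr
      rw [sub_zero]
      exact abs_le.mp this
  simpa [sup'_const, inf'_const, hullWidth, two_mul] using key

theorem abs_hullPerimeter_le {z : ℕ → ℝ²} {B : ℝ} (hz : ∀ j, ‖z j‖ ≤ B) (n : ℕ) :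
    |hullPerimeter z n| ≤ Real.pi * (2 * (n * B)) := by
  have := intervalIntegral.norm_integral_le_of_norm_le_const (a := 0) (b := Real.pi)
    fun θ _ => (Real.norm_eq_abs (hullWidth z n (dir θ))).trans_le
      (abs_hullWidth_le hz n (norm_dir θ))
  rwa [Real.norm_eq_abs, sub_zero, abs_of_pos Real.pi_pos, mul_comm] at this

theorem hullPerimeter_congr {z z' : ℕ → ℝ²} {n : ℕ} (h : ∀ j < n, z' j = z j) :
    hullPerimeter z' n = hullPerimeter z n := by
  have hsum : ∀ k ∈ range (n + 1), ∑ j ∈ range k, z' j = ∑ j ∈ range k, z j := fun k hk =>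
    sum_congr rfl fun j hj =>
      h j ((mem_range.mp hj).trans_le (Nat.lt_succ_iff.mp (mem_range.mp hk)))
  simp only [hullPerimeter, hullWidth]
  congr! 3 with θ
  · exact sup'_congr _ rfl fun k hk => by rw [hsum k hk]
  · exact inf'_congr _ rfl fun k hk => by rw [hsum k hk]

noncomputable def cutoff (B : ℝ) (v : ℝ²) : ℝ² := if ‖v‖ ≤ B then v else 0

theorem measurable_cutoff (B : ℝ) : Measurable (cutoff B) :=
  Measurable.ite (measurableSet_le measurable_norm measurable_const) measurable_id measurable_const

theorem norm_cutoff_le {B : ℝ} (hB : 0 ≤ B) (v : ℝ²) : ‖cutoff B v‖ ≤ B := by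
  unfold cutoff
  split_ifs with hv
  · exact hv
  · simpa using hB

noncomputable def cutoffPerimeter (B : ℝ) (n : ℕ) (x : Fin n → ℝ²) : ℝ :=
  hullPerimeter (fun j => if h : j < n then cutoff B (x ⟨j, h⟩) else 0) n

theorem measurable_cutoffPerimeter (B : ℝ) (n : ℕ) : Measurable (cutoffPerimeter B n) := by
  refine (continuous_hullPerimeter n).measurable.comp (measurable_pi_lambda _ fun j => ?_)
  by_cases h : j < n
  · simp only [h, ↓reduceDIte]
    exact (measurable_cutoff B).comp (measurable_pi_apply _)
  · simp only [h, ↓reduceDIte, measurable_const]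

theorem abs_cutoffPerimeter_le {B : ℝ} (hB : 0 ≤ B) {n : ℕ} (x : Fin n → ℝ²) :
    |cutoffPerimeter B n x| ≤ Real.pi * (2 * (n * B)) := by
  refine abs_hullPerimeter_le (fun j => ?_) n
  split_ifs
  · exact norm_cutoff_le hB _
  · simpa using hB

theorem abs_cutoffPerimeter_update_sub_le {B : ℝ} (hB : 0 ≤ B) {n : ℕ} (x : Fin n → ℝ²)
    (i : Fin n) (v : ℝ²) :
    |cutoffPerimeter B n (Function.update x i v) - cutoffPerimeter B n x|
      ≤ 2 * Real.pi * B := by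
  have hoff : ∀ j ≠ (i : ℕ), (if h : j < n then cutoff B (Function.update x i v ⟨j, h⟩) else 0)
      = if h : j < n then cutoff B (x ⟨j, h⟩) else 0 := fun j hj => by
    split_ifs with h
    · rw [Function.update_of_ne (Fin.ne_of_val_ne hj)]
    · rfl
  refine (abs_hullPerimeter_sub_le hoff n).trans ?_
  simp only [i.isLt, ↓reduceDIte, Fin.eta, Function.update_self]
  calc Real.pi * ‖cutoff B v - cutoff B (x i)‖ ≤ Real.pi * (B + B) := by
        gcongr
        exact (norm_sub_le _ _).trans (add_le_add (norm_cutoff_le hB _) (norm_cutoff_le hB _))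
    _ = 2 * Real.pi * B := by ring

theorem cutoffPerimeter_eq_hullPerimeter {B : ℝ} {n : ℕ} {z : ℕ → ℝ²}
    (hz : ∀ j < n, ‖z j‖ ≤ B) : cutoffPerimeter B n (fun i => z i) = hullPerimeter z n :=
  hullPerimeter_congr fun j hj => by simp only [hj, ↓reduceDIte, cutoff, hz j hj, if_true]

end Geometry

theorem perimeter_concentration_general {Ω : Type*} [MeasurableSpace Ω]
    (P : Measure Ω) [IsProbabilityMeasure P]
    (Z : ℕ → Ω → EuclideanSpace ℝ (Fin 2))
    (hmeas : ∀ i, Measurable (Z i))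
    (hindep : iIndepFun Z P)
    (hident : ∀ i, IdentDistrib (Z i) (Z 0) P P)
    (B : ℝ) (hB : 0 < B)
    (hbound : ∀ᵐ ω ∂P, ‖Z 0 ω‖ ≤ B)
    (n : ℕ) (t : ℝ) (ht : 0 < t) :
    P {ω | t < |perim Z n ω - ∫ ω', perim Z n ω' ∂P|}
      ≤ ENNReal.ofReal (2 * Real.exp (-(t ^ 2) / (8 * Real.pi ^ 2 * B ^ 2 * n))) := by
  have hbdd : ∀ᵐ ω ∂P, ∀ j, ‖Z j ω‖ ≤ B := ae_all_iff.2 fun j =>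
    (hident j).symm.ae_snd (measurableSet_le measurable_norm measurable_const) hbound
  have hfZ : ∀ᵐ ω ∂P, cutoffPerimeter B n (fun i => Z i ω) = perim Z n ω :=
    hbdd.mono fun ω hω =>
      (cutoffPerimeter_eq_hullPerimeter fun j _ => hω j).trans (perim_eq_hullPerimeter Z n ω).symm
  set c : ℝ≥0 := (2 * Real.pi * B).toNNReal
  have hc : (c : ℝ) = 2 * Real.pi * B := Real.coe_toNNReal _ (by positivity)
  have hsubG := (hindep.precomp Fin.val_injective).hasSubgaussianMGF_of_abs_update_sub_le
    (fun i => hmeas i) (measurable_cutoffPerimeter B n) (abs_cutoffPerimeter_le hB.le)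
    (fun _ => c) fun x i v => hc ▸ abs_cutoffPerimeter_update_sub_le hB.le x i v
  have hperim : HasSubgaussianMGF (fun ω => perim Z n ω - ∫ ω', perim Z n ω' ∂P)
      (∑ _i : Fin n, c ^ 2) P :=
    hsubG.congr (hfZ.mono fun ω hω => by simp only [hω, integral_congr_ae hfZ])
  refine (hperim.measure_lt_abs_le ht.le).trans_eq ?_
  congr 4
  push_cast [hc]
  simp only [Finset.sum_const, Finset.card_univ, Fintype.card_fin, nsmul_eq_mul]
  ring

/-- Azuma–Hoeffding concentration for the perimeter length of the convex hull of a
random walk with bounded increments. -/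
theorem perimeter_concentration {Ω : Type*} [MeasurableSpace Ω]
    (P : Measure Ω) [IsProbabilityMeasure P]
    (Z : ℕ → Ω → EuclideanSpace ℝ (Fin 2))
    (hmeas : ∀ i, Measurable (Z i))
    (hindep : iIndepFun Z P)
    (hident : ∀ i, IdentDistrib (Z i) (Z 0) P P)
    (B : ℝ) (hB : 0 < B)
    (hbound : ∀ᵐ ω ∂P, ‖Z 0 ω‖ ≤ B)
    (n : ℕ) (hn : 1 ≤ n) (t : ℝ) (ht : 0 < t) :
    P {ω | t < |perim Z n ω - ∫ ω', perim Z n ω' ∂P|}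
      ≤ ENNReal.ofReal (2 * Real.exp (-(t ^ 2) / (8 * Real.pi ^ 2 * B ^ 2 * n))) :=
  perimeter_concentration_general P Z hmeas hindep hident B hB hbound n t ht
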